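/- arXiv:1312.7042 — 4 statements merged into one kernel-verified Lean document; each statement's English description precedes it below -/
import Mathlib

section
/- Let n, p be positive integers, let a_{ij} and W_i (i = 1,…,p, j = 1,…,n) be positive integers, let W = max_i W_i, and set â_{ij} = ⌈a_{ij} W / W_i⌉. Let B be any symmetric n×n matrix with nonnegative real entries. If x ∈ [0,1]^n satisfies ∑_j a_{ij} x_j ≤ W_i for every i, then the vector x/2 satisfies ∑_j â_{ij} (x_j/2) ≤ W for every i, and (x/2)^T B (x/2) = (1/4) x^T B x. Consequently the optimum value of the scaled problem (constraints ∑_j â_{ij} x_j ≤ W) is at least one quarter of the optimum value of the original problem (constraints ∑_j a_{ij} x_j ≤ W_i). -/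
/-- scaling the PIQP constraints to a uniform right-hand side `W`
loses at most a factor 4 in the optimum. -/
theorem piqp_scaling (n p : ℕ) (hn : 0 < n) (hp : 0 < p)
    (a : Fin p → Fin n → ℕ) (ha : ∀ i j, 0 < a i j)
    (Wi : Fin p → ℕ) (hWi : ∀ i, 0 < Wi i)
    (W : ℕ) (hWmax : IsGreatest (Set.range Wi) W)
    (ahat : Fin p → Fin n → ℕ)
    (hahat : ∀ i j, ahat i j = ⌈(a i j : ℝ) * (W : ℝ) / (Wi i : ℝ)⌉₊)
    (B : Fin n → Fin n → ℝ) (hBsymm : ∀ k l, B k l = B l k) (hBnn : ∀ k l, 0 ≤ B k l) :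
    (∀ x : Fin n → ℝ, (∀ j, x j ∈ Set.Icc (0 : ℝ) 1) →
      (∀ i, ∑ j, (a i j : ℝ) * x j ≤ (Wi i : ℝ)) →
      ((∀ i, ∑ j, (ahat i j : ℝ) * (x j / 2) ≤ (W : ℝ)) ∧
        (∑ k, ∑ l, B k l * (x k / 2) * (x l / 2)
          = (1 / 4) * ∑ k, ∑ l, B k l * x k * x l))) ∧
    (1 / 4) * sSup {y | ∃ x : Fin n → ℝ, (∀ j, x j ∈ Set.Icc (0 : ℝ) 1) ∧
        (∀ i, ∑ j, (a i j : ℝ) * x j ≤ (Wi i : ℝ)) ∧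
        y = ∑ k, ∑ l, B k l * x k * x l} ≤
      sSup {y | ∃ x : Fin n → ℝ, (∀ j, x j ∈ Set.Icc (0 : ℝ) 1) ∧
        (∀ i, ∑ j, (ahat i j : ℝ) * x j ≤ (W : ℝ)) ∧
        y = ∑ k, ∑ l, B k l * x k * x l} := by
  obtain ⟨⟨i0, hi0⟩, hub⟩ := hWmax
  have hWpos : 0 < W := hi0 ▸ hWi i0
  have hWiW : ∀ i, Wi i ≤ W := fun i => hub ⟨i, rfl⟩
  have key : ∀ x : Fin n → ℝ, (∀ j, x j ∈ Set.Icc (0 : ℝ) 1) →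
      (∀ i, ∑ j, (a i j : ℝ) * x j ≤ (Wi i : ℝ)) →
      ((∀ i, ∑ j, (ahat i j : ℝ) * (x j / 2) ≤ (W : ℝ)) ∧
        (∑ k, ∑ l, B k l * (x k / 2) * (x l / 2)
          = (1 / 4) * ∑ k, ∑ l, B k l * x k * x l)) := by
    intro x hx hcon
    constructor
    · intro i
      have hWi' : (0:ℝ) < Wi i := by exact_mod_cast hWi i
      have hbound : ∀ j, (ahat i j : ℝ) * (x j / 2)
          ≤ (W : ℝ)/(Wi i) * ((a i j : ℝ) * x j) := by
        intro j
        have hy1 : (1:ℝ) ≤ (a i j : ℝ) * W / Wi i := by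
          rw [le_div_iff₀ hWi']
          have h1 : (1:ℝ) ≤ a i j := by exact_mod_cast ha i j
          have h2 : (Wi i : ℝ) ≤ W := by exact_mod_cast hWiW i
          nlinarith
        have hceil : (ahat i j : ℝ) ≤ 2 * ((a i j : ℝ) * W / Wi i) := by
          rw [hahat]
          have := Nat.ceil_lt_add_one (by linarith : (0:ℝ) ≤ (a i j : ℝ) * W / Wi i)
          linarith
        have hx0 : 0 ≤ x j := (hx j).1
        calc (ahat i j : ℝ) * (x j / 2)
            ≤ 2 * ((a i j : ℝ) * W / Wi i) * (x j / 2) :=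
              mul_le_mul_of_nonneg_right hceil (by linarith)
          _ = (W : ℝ)/(Wi i) * ((a i j : ℝ) * x j) := by field_simp
      calc ∑ j, (ahat i j : ℝ) * (x j / 2)
          ≤ ∑ j, (W : ℝ)/(Wi i) * ((a i j : ℝ) * x j) :=
            Finset.sum_le_sum fun j _ => hbound j
        _ = (W : ℝ)/(Wi i) * ∑ j, (a i j : ℝ) * x j := by rw [Finset.mul_sum]
        _ ≤ (W : ℝ)/(Wi i) * (Wi i) :=
            mul_le_mul_of_nonneg_left (hcon i) (by positivity)
        _ = W := by field_simp
    · rw [Finset.mul_sum]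
      refine Finset.sum_congr rfl fun k _ => ?_
      rw [Finset.mul_sum]
      exact Finset.sum_congr rfl fun l _ => by ring
  refine ⟨key, ?_⟩
  set T := {y | ∃ x : Fin n → ℝ, (∀ j, x j ∈ Set.Icc (0 : ℝ) 1) ∧
        (∀ i, ∑ j, (ahat i j : ℝ) * x j ≤ (W : ℝ)) ∧
        y = ∑ k, ∑ l, B k l * x k * x l} with hT
  have hTbdd : BddAbove T := by
    refine ⟨∑ k, ∑ l, B k l, ?_⟩
    rintro y ⟨x, hx, -, rfl⟩
    refine Finset.sum_le_sum fun k _ => Finset.sum_le_sum fun l _ => ?_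
    have h1 := (hx k).1; have h2 := (hx k).2
    have h3 := (hx l).1; have h4 := (hx l).2
    have hxx : x k * x l ≤ 1 := mul_le_one₀ h2 h3 h4
    nlinarith [mul_le_mul_of_nonneg_left hxx (hBnn k l)]
  have hT0 : (0:ℝ) ∈ T := by
    refine ⟨fun _ => 0, fun j => ⟨le_refl _, zero_le_one⟩, fun i => ?_, by simp⟩
    simp [Nat.cast_nonneg]
  have hTsup : 0 ≤ sSup T := le_csSup hTbdd hT0
  have hmain : sSup {y | ∃ x : Fin n → ℝ, (∀ j, x j ∈ Set.Icc (0 : ℝ) 1) ∧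
        (∀ i, ∑ j, (a i j : ℝ) * x j ≤ (Wi i : ℝ)) ∧
        y = ∑ k, ∑ l, B k l * x k * x l} ≤ 4 * sSup T := by
    apply Real.sSup_le _ (by linarith)
    rintro y ⟨x, hx, hcon, rfl⟩
    obtain ⟨hfeas, hval⟩ := key x hx hcon
    have hmem : (1/4) * ∑ k, ∑ l, B k l * x k * x l ∈ T := by
      refine ⟨fun j => x j / 2, fun j => ?_, hfeas, hval.symm⟩
      have := hx j
      constructor <;> simp at this ⊢ <;> linarith [this.1, this.2]
    have := le_csSup hTbdd hmem
    linarith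
  linarith
end

section
/- Let S be a finite set with |S| = m, let t be an integer with 2 ≤ t ≤ m, let b assign a nonnegative real to every unordered pair of distinct elements of S, let w assign a nonnegative real to every element of S, and let K ≥ 0. Suppose that for every subset T ⊆ S with |T| = t one has ∑_{{u,v} ⊆ T} b({u,v}) ≤ K ∑_{v ∈ T} w(v). Then ∑_{{u,v} ⊆ S} b({u,v}) ≤ (m/(t−1)) · K · ∑_{v ∈ S} w(v). -/
/-!
Sum the hypothesis over all `t`-subsets `T ⊆ S`. Exchanging the order of summation, each edge
of `S` lies in `C(m-2, t-2)` of them and each vertex in `C(m-1, t-1)`, so with `B` the total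
benefit and `W` the total weight, `C(m-2, t-2) · B ≤ K · C(m-1, t-1) · W`. Since
`C(m-1, t-1) / C(m-2, t-2) = (m-1)/(t-1)`, this gives `B ≤ (m-1)/(t-1) · K · W`.
-/

open Finset

namespace Finset

variable {α ι β : Type*} [DecidableEq α] [AddCommMonoid β]

theorem sum_powersetCard_sum_filter_subset (S : Finset α) {t k : ℕ} (hkt : k ≤ t)
    (s : Finset ι) (supp : ι → Finset α) (hsupp : ∀ i ∈ s, supp i ⊆ S ∧ #(supp i) = k)
    (f : ι → β) :
    ∑ T ∈ S.powersetCard t, ∑ i ∈ s with supp i ⊆ T, f i =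
      (#S - k).choose (t - k) • ∑ i ∈ s, f i := by
  simp_rw [sum_filter]
  rw [sum_comm, smul_sum]
  refine sum_congr rfl fun i hi => ?_
  obtain ⟨hiS, hik⟩ := hsupp i hi
  rw [← sum_filter, sum_const, card_filter_powersetCard_subset _ _ _ hiS (hik ▸ hkt), hik]

theorem sum_powersetCard_sum (S : Finset α) {t : ℕ} (ht : 1 ≤ t) (w : α → β) :
    ∑ T ∈ S.powersetCard t, ∑ v ∈ T, w v = (#S - 1).choose (t - 1) • ∑ v ∈ S, w v := by
  rw [← sum_powersetCard_sum_filter_subset S ht S singleton (fun v hv => by simpa using hv)]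
  refine sum_congr rfl fun T hT => sum_congr ?_ fun _ _ => rfl
  ext v
  simpa using fun hv => (mem_powersetCard.mp hT).1 hv

theorem sum_powersetCard_sum_offDiag_sym2 (S : Finset α) {t : ℕ} (ht : 2 ≤ t)
    (b : Sym2 α → β) :
    ∑ T ∈ S.powersetCard t, ∑ e ∈ T.sym2 with ¬e.IsDiag, b e =
      (#S - 2).choose (t - 2) • ∑ e ∈ S.sym2 with ¬e.IsDiag, b e := by
  rw [← sum_powersetCard_sum_filter_subset S ht _ Sym2.toFinset fun e he => ?_]
  · refine sum_congr rfl fun T hT => sum_congr ?_ fun _ _ => rfl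
    ext e
    have hTS := (mem_powersetCard.mp hT).1
    simp only [mem_filter, mem_sym2_iff, subset_iff, Sym2.mem_toFinset]
    grind
  · obtain ⟨heS, hd⟩ := mem_filter.mp he
    exact ⟨fun a ha => mem_sym2_iff.mp heS a (Sym2.mem_toFinset.mp ha),
      Sym2.card_toFinset_of_not_isDiag e hd⟩

end Finset

theorem Nat.sub_one_mul_choose_sub_two {m t : ℕ} (hm : 2 ≤ m) (ht : 2 ≤ t) :
    (m - 1) * (m - 2).choose (t - 2) = (m - 1).choose (t - 1) * (t - 1) := by
  obtain ⟨n, rfl⟩ := Nat.exists_eq_add_of_le' hm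
  obtain ⟨k, rfl⟩ := Nat.exists_eq_add_of_le' ht
  simpa using Nat.add_one_mul_choose_eq n k

theorem le_div_mul_of_choose_mul_le {m t : ℕ} (ht : 2 ≤ t) (htm : t ≤ m) {B X : ℝ}
    (h : ((m - 2).choose (t - 2) : ℝ) * B ≤ (m - 1).choose (t - 1) * X) :
    B ≤ ((m : ℝ) - 1) / (t - 1) * X := by
  have hpascal :
      ((m : ℝ) - 1) * (m - 2).choose (t - 2) = (m - 1).choose (t - 1) * ((t : ℝ) - 1) := by
    have := Nat.sub_one_mul_choose_sub_two (ht.trans htm) ht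
    rw [← Nat.cast_pred (by omega), ← Nat.cast_pred (by omega)]
    exact_mod_cast this
  have ht1 : (0 : ℝ) < t - 1 := by linarith [show (2 : ℝ) ≤ t by exact_mod_cast ht]
  have hc : (0 : ℝ) < (m - 2).choose (t - 2) := by exact_mod_cast Nat.choose_pos (by omega)
  rw [div_mul_eq_mul_div, le_div_iff₀ ht1]
  refine le_of_mul_le_mul_left ?_ hc
  calc ((m - 2).choose (t - 2) : ℝ) * (B * (t - 1)) = (t - 1) * ((m - 2).choose (t - 2) * B) := by
        ring
    _ ≤ (t - 1) * ((m - 1).choose (t - 1) * X) := by gcongr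
    _ = (m - 2).choose (t - 2) * ((m - 1) * X) := by linear_combination X * hpascal.symm

theorem total_benefit_bound_general {V : Type*} [DecidableEq V]
    (S : Finset V) (m t : ℕ) (hm : S.card = m) (ht2 : 2 ≤ t) (htm : t ≤ m)
    (b : Sym2 V → ℝ)
    (w : V → ℝ) (hw : ∀ v, 0 ≤ w v)
    (K : ℝ) (hK : 0 ≤ K)
    (hyp : ∀ T ⊆ S, T.card = t →
      ∑ e ∈ T.sym2.filter (fun e => ¬ e.IsDiag), b e ≤ K * ∑ v ∈ T, w v) :
    ∑ e ∈ S.sym2.filter (fun e => ¬ e.IsDiag), b e ≤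
      ((m : ℝ) / ((t : ℝ) - 1)) * K * ∑ v ∈ S, w v := by
  have hKW : 0 ≤ K * ∑ v ∈ S, w v := mul_nonneg hK (sum_nonneg fun v _ => hw v)
  have hcount := sum_le_sum fun T hT =>
    hyp T (mem_powersetCard.mp hT).1 (mem_powersetCard.mp hT).2
  rw [sum_powersetCard_sum_offDiag_sym2 S ht2, ← mul_sum, sum_powersetCard_sum S (by omega),
    nsmul_eq_mul, nsmul_eq_mul, mul_left_comm, hm] at hcount
  calc _ ≤ ((m : ℝ) - 1) / (t - 1) * (K * ∑ v ∈ S, w v) :=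
        le_div_mul_of_choose_mul_le ht2 htm hcount
    _ ≤ (m : ℝ) / (t - 1) * (K * ∑ v ∈ S, w v) := by
      gcongr <;> linarith [show (2 : ℝ) ≤ t by exact_mod_cast ht2]
    _ = _ := by ring

/-- total edge benefit of `S` is at most `(m/(t-1)) K` times its
total weight, given the per-`t`-subset inequality. -/
theorem total_benefit_bound {V : Type*} [DecidableEq V]
    (S : Finset V) (m t : ℕ) (hm : S.card = m) (ht2 : 2 ≤ t) (htm : t ≤ m)
    (b : Sym2 V → ℝ) (hb : ∀ e, 0 ≤ b e)
    (w : V → ℝ) (hw : ∀ v, 0 ≤ w v)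
    (K : ℝ) (hK : 0 ≤ K)
    (hyp : ∀ T ⊆ S, T.card = t →
      ∑ e ∈ T.sym2.filter (fun e => ¬ e.IsDiag), b e ≤ K * ∑ v ∈ T, w v) :
    ∑ e ∈ S.sym2.filter (fun e => ¬ e.IsDiag), b e ≤
      ((m : ℝ) / ((t : ℝ) - 1)) * K * ∑ v ∈ S, w v :=
  total_benefit_bound_general S m t hm ht2 htm b w hw K hK hyp
end

section
/- Let t ≥ 2 and p ≥ 1 be integers and W > 0 a real. Let A' and O' be disjoint finite sets of vertices with |O'| ≥ t, let b assign a nonnegative real to every unordered pair of distinct vertices, and let w assign a nonnegative real to every vertex. Write b(A') = ∑_{{u,v} ⊆ A'} b({u,v}), b(O') = ∑_{{u,v} ⊆ O'} b({u,v}), w(A') = ∑_{v ∈ A'} w(v), w(O') = ∑_{v ∈ O'} w(v). Suppose w(A') ≥ W/2, w(O') ≤ pW, b(A') > 0, and there exists K ≥ 0 with K ≤ b(A')/w(A') such that ∑_{{u,v} ⊆ T} b({u,v}) ≤ K ∑_{v ∈ T} w(v) for every subset T ⊆ O' with |T| = t. Then b(O') ≤ (2p|O'|/(t−1)) · b(A').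 -/
open Finset in
lemma count_subsets {V : Type*} [DecidableEq V] (s a : Finset V) (ha : a ⊆ s)
    (t : ℕ) (hat : a.card ≤ t) :
    ((s.powersetCard t).filter (fun T => a ⊆ T)).card
      = (s.card - a.card).choose (t - a.card) := by
  rw [← card_sdiff_of_subset ha, ← card_powersetCard (t - a.card) (s \ a)]
  apply Finset.card_bij (fun T _ => T \ a)
  · intro T hT
    simp only [mem_filter, mem_powersetCard] at hT
    obtain ⟨⟨hTs, hTc⟩, haT⟩ := hT
    rw [mem_powersetCard]
    exact ⟨sdiff_subset_sdiff hTs (le_refl a), by rw [card_sdiff_of_subset haT, hTc]⟩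
  · intro T1 h1 T2 h2 heq
    simp only [mem_filter, mem_powersetCard] at h1 h2
    rw [← sdiff_union_of_subset h1.2, ← sdiff_union_of_subset h2.2, heq]
  · intro U hU
    rw [mem_powersetCard] at hU
    obtain ⟨hUs, hUc⟩ := hU
    have hdisj : Disjoint U a := (subset_sdiff.mp hUs).2
    refine ⟨U ∪ a, ?_, ?_⟩
    · simp only [mem_filter, mem_powersetCard]
      refine ⟨⟨union_subset ((subset_sdiff.mp hUs).1) ha, ?_⟩, subset_union_right⟩
      rw [card_union_of_disjoint hdisj, hUc]
      omega
    · rw [union_sdiff_right, sdiff_eq_self_of_disjoint hdisj]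

open Finset in
lemma edge_double_count {V : Type*} [DecidableEq V] (s : Finset V) (t : ℕ) (ht : 2 ≤ t)
    (b : Sym2 V → ℝ) :
    ∑ T ∈ s.powersetCard t, ∑ e ∈ T.sym2.filter (fun e => ¬ e.IsDiag), b e
      = ((s.card - 2).choose (t - 2) : ℝ) * ∑ e ∈ s.sym2.filter (fun e => ¬ e.IsDiag), b e := by
  have step1 : ∀ T ∈ s.powersetCard t,
      ∑ e ∈ T.sym2.filter (fun e => ¬ e.IsDiag), b e
        = ∑ e ∈ s.sym2.filter (fun e => ¬ e.IsDiag), if e ∈ T.sym2 then b e else 0 := by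
    intro T hT
    rw [mem_powersetCard] at hT
    rw [Finset.sum_ite_mem, Finset.filter_inter,
      Finset.inter_eq_right.mpr (Finset.sym2_mono hT.1)]
  rw [Finset.sum_congr rfl step1, Finset.sum_comm, Finset.mul_sum]
  refine Finset.sum_congr rfl ?_
  intro e he
  rw [← Finset.sum_filter, Finset.sum_const, nsmul_eq_mul]
  congr 1
  simp only [mem_filter] at he
  induction e using Sym2.ind with
  | _ u v =>
    have huv : u ≠ v := by simpa [Sym2.mk_isDiag_iff] using he.2
    have hmem : u ∈ s ∧ v ∈ s := Finset.mk_mem_sym2_iff.mp he.1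
    have hcard2 : ({u, v} : Finset V).card = 2 := by
      rw [card_insert_of_notMem (by simpa using huv), card_singleton]
    have hfe : (s.powersetCard t).filter (fun T => s(u,v) ∈ T.sym2)
        = (s.powersetCard t).filter (fun T => ({u, v} : Finset V) ⊆ T) := by
      apply filter_congr
      intro T _
      simp [mk_mem_sym2_iff, insert_subset_iff]
    rw [hfe, count_subsets s {u, v} (by simp [insert_subset_iff, hmem.1, hmem.2]) t
      (hcard2 ▸ ht), hcard2]

open Finset in
lemma vertex_double_count {V : Type*} [DecidableEq V] (s : Finset V) (t : ℕ) (ht : 1 ≤ t)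
    (w : V → ℝ) :
    ∑ T ∈ s.powersetCard t, ∑ v ∈ T, w v
      = ((s.card - 1).choose (t - 1) : ℝ) * ∑ v ∈ s, w v := by
  have step1 : ∀ T ∈ s.powersetCard t,
      ∑ v ∈ T, w v = ∑ v ∈ s, if v ∈ T then w v else 0 := by
    intro T hT
    rw [mem_powersetCard] at hT
    rw [Finset.sum_ite_mem, Finset.inter_eq_right.mpr hT.1]
  rw [Finset.sum_congr rfl step1, Finset.sum_comm, Finset.mul_sum]
  refine Finset.sum_congr rfl ?_
  intro v hv
  rw [← Finset.sum_filter, Finset.sum_const, nsmul_eq_mul]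
  congr 1
  have hfe : (s.powersetCard t).filter (fun T => v ∈ T)
      = (s.powersetCard t).filter (fun T => ({v} : Finset V) ⊆ T) := by
    apply filter_congr
    intro T _
    simp
  rw [hfe, count_subsets s {v} (by simpa using hv) t (by simpa using ht)]
  simp

/-- the key inequality in the analysis of the greedy algorithm,
comparing the benefit of the (transformed) optimal solution `O'` with the
benefit of the (transformed) greedy solution `A'`. -/
theorem greedy_vs_optimal {V : Type*} [DecidableEq V]
    (t p : ℕ) (ht : 2 ≤ t) (hp : 1 ≤ p) (W : ℝ) (hW : 0 < W)
    (A' O' : Finset V) (hdisj : Disjoint A' O') (hO'card : t ≤ O'.card)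
    (b : Sym2 V → ℝ) (hb : ∀ e, 0 ≤ b e)
    (w : V → ℝ) (hw : ∀ v, 0 ≤ w v)
    (hwA' : W / 2 ≤ ∑ v ∈ A', w v)
    (hwO' : ∑ v ∈ O', w v ≤ (p : ℝ) * W)
    (hbA' : 0 < ∑ e ∈ A'.sym2.filter (fun e => ¬ e.IsDiag), b e)
    (K : ℝ) (hK0 : 0 ≤ K)
    (hKle : K ≤ (∑ e ∈ A'.sym2.filter (fun e => ¬ e.IsDiag), b e) / (∑ v ∈ A', w v))
    (hKT : ∀ T ⊆ O', T.card = t →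
      ∑ e ∈ T.sym2.filter (fun e => ¬ e.IsDiag), b e ≤ K * ∑ v ∈ T, w v) :
    ∑ e ∈ O'.sym2.filter (fun e => ¬ e.IsDiag), b e ≤
      (2 * (p : ℝ) * (O'.card : ℝ) / ((t : ℝ) - 1)) *
        ∑ e ∈ A'.sym2.filter (fun e => ¬ e.IsDiag), b e := by
  set bO := ∑ e ∈ O'.sym2.filter (fun e => ¬ e.IsDiag), b e with hbOdef
  set bA := ∑ e ∈ A'.sym2.filter (fun e => ¬ e.IsDiag), b e with hbAdef
  set wO := ∑ v ∈ O', w v with hwOdef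
  set wA := ∑ v ∈ A', w v with hwAdef
  set n := O'.card with hndef
  -- sum the hypothesis over all t-subsets
  have hsum : ∑ T ∈ O'.powersetCard t, ∑ e ∈ T.sym2.filter (fun e => ¬ e.IsDiag), b e
      ≤ ∑ T ∈ O'.powersetCard t, K * ∑ v ∈ T, w v := by
    apply Finset.sum_le_sum
    intro T hT
    rw [Finset.mem_powersetCard] at hT
    exact hKT T hT.1 hT.2
  rw [edge_double_count O' t ht b] at hsum
  have hrhs : ∑ T ∈ O'.powersetCard t, K * ∑ v ∈ T, w v
      = K * (((n - 1).choose (t - 1) : ℝ) * wO) := by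
    rw [← Finset.mul_sum, vertex_double_count O' t (by omega) w]
  rw [hrhs] at hsum
  -- the binomial identity
  have hid : ((n : ℝ) - 1) * ((n - 2).choose (t - 2) : ℝ)
      = ((n - 1).choose (t - 1) : ℝ) * ((t : ℝ) - 1) := by
    have h := Nat.add_one_mul_choose_eq (n - 2) (t - 2)
    rw [show n - 2 + 1 = n - 1 by omega, show t - 2 + 1 = t - 1 by omega] at h
    have e1 : ((t - 1 : ℕ) : ℝ) = (t : ℝ) - 1 := by
      rw [Nat.cast_sub (by omega)]; norm_num
    have e2 : ((n - 1 : ℕ) : ℝ) = (n : ℝ) - 1 := by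
      rw [Nat.cast_sub (by omega)]; norm_num
    rw [← e1, ← e2, ← Nat.cast_mul, ← Nat.cast_mul, h]
  -- positivity facts
  have hc2pos : (0 : ℝ) < ((n - 2).choose (t - 2) : ℝ) := by
    exact_mod_cast Nat.choose_pos (by omega : t - 2 ≤ n - 2)
  have hc1nonneg : (0 : ℝ) ≤ ((n - 1).choose (t - 1) : ℝ) := by positivity
  have hwOnn : 0 ≤ wO := Finset.sum_nonneg fun v _ => hw v
  have hwApos : 0 < wA := lt_of_lt_of_le (by linarith) hwA'
  have hKA : K * wA ≤ bA := by
    rw [le_div_iff₀ hwApos] at hKle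
    exact hKle
  have hKW : K * W ≤ 2 * bA := by nlinarith
  have htR : (0 : ℝ) < (t : ℝ) - 1 := by
    have : (2 : ℝ) ≤ (t : ℝ) := by exact_mod_cast ht
    linarith
  have hnR : (1 : ℝ) ≤ (n : ℝ) := by
    have : (2 : ℝ) ≤ (n : ℝ) := by exact_mod_cast le_trans ht hO'card
    linarith
  -- combine
  have hKwO : K * wO ≤ 2 * (p : ℝ) * bA := by
    have hpW : K * wO ≤ K * ((p : ℝ) * W) := by
      apply mul_le_mul_of_nonneg_left hwO' hK0
    have hp1 : (1 : ℝ) ≤ (p : ℝ) := by exact_mod_cast hp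
    nlinarith
  have hbOnn : 0 ≤ bO := Finset.sum_nonneg fun e _ => hb e
  have hp0 : (0 : ℝ) ≤ (p : ℝ) := Nat.cast_nonneg p
  rw [div_mul_eq_mul_div, le_div_iff₀ htR]
  -- goal : bO * ((t:ℝ) - 1) ≤ 2 * p * n * bA
  have h1 : ((n - 2).choose (t - 2) : ℝ) * bO * ((t : ℝ) - 1)
      ≤ K * (((n - 1).choose (t - 1) : ℝ) * wO) * ((t : ℝ) - 1) :=
    mul_le_mul_of_nonneg_right hsum (le_of_lt htR)
  have h2 : K * (((n - 1).choose (t - 1) : ℝ) * wO) * ((t : ℝ) - 1)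
      = (K * wO) * (((n - 1).choose (t - 1) : ℝ) * ((t : ℝ) - 1)) := by ring
  rw [h2, ← hid] at h1
  have h3 : (K * wO) * (((n : ℝ) - 1) * ((n - 2).choose (t - 2) : ℝ))
      ≤ (2 * (p : ℝ) * bA) * (((n : ℝ) - 1) * ((n - 2).choose (t - 2) : ℝ)) :=
    mul_le_mul_of_nonneg_right hKwO (mul_nonneg (by linarith) hc2pos.le)
  have h4 : (2 * (p : ℝ) * bA) * (((n : ℝ) - 1) * ((n - 2).choose (t - 2) : ℝ))
      ≤ (2 * (p : ℝ) * bA * ((n - 2).choose (t - 2) : ℝ)) * (n : ℝ) := by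
    have e : (2 * (p : ℝ) * bA) * (((n : ℝ) - 1) * ((n - 2).choose (t - 2) : ℝ))
        = (2 * (p : ℝ) * bA * ((n - 2).choose (t - 2) : ℝ)) * ((n : ℝ) - 1) := by ring
    rw [e]
    apply mul_le_mul_of_nonneg_left (by linarith)
    have := hbA'.le
    positivity
  have key : ((n - 2).choose (t - 2) : ℝ) * (bO * ((t : ℝ) - 1))
      ≤ ((n - 2).choose (t - 2) : ℝ) * (2 * (p : ℝ) * (n : ℝ) * bA) := by
    calc ((n - 2).choose (t - 2) : ℝ) * (bO * ((t : ℝ) - 1))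
        = ((n - 2).choose (t - 2) : ℝ) * bO * ((t : ℝ) - 1) := by ring
      _ ≤ (2 * (p : ℝ) * bA * ((n - 2).choose (t - 2) : ℝ)) * (n : ℝ) :=
          le_trans h1 (le_trans h3 h4)
      _ = ((n - 2).choose (t - 2) : ℝ) * (2 * (p : ℝ) * (n : ℝ) * bA) := by ring
  exact le_of_mul_le_mul_left key hc2pos
end

section
/- Let p, n be positive integers, let a_{ij} (i = 1,…,p, j = 1,…,n) be nonnegative reals with a_{ij} ≤ W for all i,j, where W > 0, and let b_1,…,b_n be nonnegative reals. Suppose x ∈ [0,1]^n satisfies ∑_j a_{ij} x_j ≤ W for every i, and suppose the set P = { j : x_j ∉ {0,1} } has at most p elements. Then there exists z ∈ {0,1}^n with ∑_j a_{ij} z_j ≤ W for every i and ∑_j b_j z_j ≥ (1/(p+1)) ∑_j b_j x_j. -/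
/-- rounding a fractional knapsack solution with at most `p`
fractional coordinates loses at most a factor `p+1`. -/
theorem round_fractional_knapsack (p n : ℕ) (hp : 0 < p) (hn : 0 < n)
    (a : Fin p → Fin n → ℝ) (W : ℝ) (hW : 0 < W)
    (hann : ∀ i j, 0 ≤ a i j) (haW : ∀ i j, a i j ≤ W)
    (b : Fin n → ℝ) (hb : ∀ j, 0 ≤ b j)
    (x : Fin n → ℝ) (hx : ∀ j, 0 ≤ x j ∧ x j ≤ 1)
    (hfeas : ∀ i, ∑ j, a i j * x j ≤ W)
    (hfrac : Set.ncard {j | x j ≠ 0 ∧ x j ≠ 1} ≤ p) :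
    ∃ z : Fin n → ℝ, (∀ j, z j = 0 ∨ z j = 1) ∧
      (∀ i, ∑ j, a i j * z j ≤ W) ∧
      (1 / ((p : ℝ) + 1)) * ∑ j, b j * x j ≤ ∑ j, b j * z j := by
  classical
  set P : Finset (Fin n) := Finset.univ.filter (fun j => x j ≠ 0 ∧ x j ≠ 1) with hPdef
  have hPcard : P.card ≤ p := by
    have h : {j | x j ≠ 0 ∧ x j ≠ 1}.ncard = P.card := by
      rw [Set.ncard_eq_toFinset_card']
      congr 1
      ext j; simp [hPdef]
    omega
  set z1 : Fin n → ℝ := fun j => if x j = 1 then 1 else 0 with hz1def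
  have hz1le : ∀ j, z1 j ≤ x j := by
    intro j
    by_cases h : x j = 1 <;> simp [hz1def, h, (hx j).1]
  have hz1feas : ∀ i, ∑ j, a i j * z1 j ≤ W := fun i =>
    le_trans (Finset.sum_le_sum fun j _ =>
      mul_le_mul_of_nonneg_left (hz1le j) (hann i j)) (hfeas i)
  have hz101 : ∀ j, z1 j = 0 ∨ z1 j = 1 := by
    intro j; by_cases h : x j = 1 <;> simp [hz1def, h]
  set S1 : ℝ := ∑ j, b j * z1 j with hS1def
  have hS1nonneg : 0 ≤ S1 := Finset.sum_nonneg fun j _ => by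
    rcases hz101 j with h | h <;> simp [h, hb j]
  have hsplit : ∑ j, b j * x j = S1 + ∑ j ∈ P, b j * x j := by
    have h1 : S1 = ∑ j ∈ Finset.univ.filter (fun j => ¬(x j ≠ 0 ∧ x j ≠ 1)), b j * x j := by
      rw [hS1def,
        ← Finset.sum_filter_add_sum_filter_not Finset.univ (fun j => ¬(x j ≠ 0 ∧ x j ≠ 1))
          (fun j => b j * z1 j)]
      have hA : ∀ j ∈ Finset.univ.filter (fun j => ¬(x j ≠ 0 ∧ x j ≠ 1)),
          b j * z1 j = b j * x j := by
        intro j hj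
        simp only [Finset.mem_filter, not_and_or, not_not] at hj
        rcases hj.2 with h | h <;> simp [hz1def, h, hW.ne']
      have hB : ∀ j ∈ Finset.univ.filter (fun j => ¬¬(x j ≠ 0 ∧ x j ≠ 1)),
          b j * z1 j = 0 := by
        intro j hj
        simp only [Finset.mem_filter, not_not] at hj
        simp [hz1def, hj.2.2]
      rw [Finset.sum_congr rfl hA, Finset.sum_congr rfl hB]
      simp
    rw [h1, hPdef, add_comm,
      Finset.sum_filter_add_sum_filter_not]
  rcases P.eq_empty_or_nonempty with hPe | ⟨m, hm⟩
  · refine ⟨z1, hz101, hz1feas, ?_⟩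
    have hsum : ∑ j, b j * x j = S1 := by rw [hsplit, hPe]; simp
    rw [hsum]
    have hc : (0:ℝ) < (p:ℝ) + 1 := by positivity
    rw [div_mul_eq_mul_div, div_le_iff₀ hc]
    nlinarith
  · obtain ⟨m', hm', hmax⟩ := P.exists_max_image (fun j => b j * x j) ⟨m, hm⟩
    have hxm : x m' ≤ 1 := (hx m').2
    have hbm : 0 ≤ b m' := hb m'
    have hmx : b m' * x m' ≤ b m' := mul_le_of_le_one_right hbm hxm
    have hPsum : ∑ j ∈ P, b j * x j ≤ (p:ℝ) * b m' := by
      calc ∑ j ∈ P, b j * x j ≤ P.card • (b m' * x m') :=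
            Finset.sum_le_card_nsmul P _ _ (fun j hj => hmax j hj)
        _ = (P.card : ℝ) * (b m' * x m') := by simp [nsmul_eq_mul]
        _ ≤ (p:ℝ) * b m' := by
            have hmm : 0 ≤ b m' * x m' := mul_nonneg hbm (hx m').1
            have : (P.card : ℝ) ≤ (p:ℝ) := by exact_mod_cast hPcard
            nlinarith
    have hc : (0:ℝ) < (p:ℝ) + 1 := by positivity
    by_cases hcmp : b m' ≤ S1
    · refine ⟨z1, hz101, hz1feas, ?_⟩
      rw [div_mul_eq_mul_div, div_le_iff₀ hc, hsplit]
      nlinarith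
    · push_neg at hcmp
      set z2 : Fin n → ℝ := fun j => if j = m' then 1 else 0 with hz2def
      refine ⟨z2, fun j => by by_cases h : j = m' <;> simp [hz2def, h], ?_, ?_⟩
      · intro i
        have : ∑ j, a i j * z2 j = a i m' := by
          rw [hz2def]
          simp [mul_ite, Finset.sum_ite_eq']
        rw [this]; exact haW i m'
      · have hz2sum : ∑ j, b j * z2 j = b m' := by
          rw [hz2def]; simp [mul_ite, Finset.sum_ite_eq']
        rw [hz2sum, div_mul_eq_mul_div, div_le_iff₀ hc, hsplit]
        nlinarith
end
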